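/- Let T[1..n] be a string, let T^R denote its reverse, and let P[1..m] (m ≥ 1) occur in T. If s is the largest position with T[s..s+m−1] = P (the rightmost occurrence of P in T), then the corresponding occurrence of the reversed pattern P^R in T^R, which starts at position n − (s+m−1) + 1, is the leftmost occurrence of P^R in T^R, and it touches a phrase boundary of the LZ77 parse of T^R: there is a phrase-end position q' of the LZ77 parse of T^R with n − s − m + 2 ≤ q' ≤ n − s + 1. -/

import Mathlib

/-! Reversal turns the rightmost occurrence of `P` in `T` into the leftmost occurrence of
`P.reverse` in `T.reverse`. A leftmost occurrence of a nonempty pattern cannot lie inside the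
copied part of an LZ77 phrase, because that part also occurs at an earlier source position,
which would carry an earlier occurrence; hence it reaches the end of its phrase. -/

namespace RStarIndex

variable {α : Type*}

/-- The substring of `T` of length `len` starting at 0-based position `s`,
    i.e. `T[s..s+len-1]` in 1-based notation `T[s+1..s+len]`. -/
def Slice (T : List α) (s len : ℕ) : List α := (T.drop s).take len

/-- `U` occurs in `T` at 0-based position `s`, i.e. `T[s..s+|U|-1] = U`. -/
def OccursAt (T U : List α) (s : ℕ) : Prop :=
  s + U.length ≤ T.length ∧ Slice T s U.length = U

/-- `ph` is the LZ77 parse of `T`: a nonempty list of phrases, each given by its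
    (start, end) pair of 0-based inclusive positions.  The first phrase starts at
    position `0`, consecutive phrases are adjacent, the last phrase ends at the last
    position of `T`, and each phrase consists of the longest prefix of the remaining
    text that occurs starting at some strictly earlier position (possibly the empty
    prefix, and capped so that one additional explicit character fits) followed by
    one additional character. -/
def IsLZ77Parse (T : List α) (ph : List (ℕ × ℕ)) : Prop :=
  0 < ph.length ∧
  (∀ (j : ℕ) (h : j < ph.length), ph[j].1 ≤ ph[j].2 ∧ ph[j].2 < T.length) ∧
  (∀ (h : 0 < ph.length), ph[0].1 = 0) ∧
  (∀ (h : ph.length - 1 < ph.length), ph[ph.length - 1].2 + 1 = T.length) ∧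
  (∀ (j : ℕ) (h : j + 1 < ph.length), ph[j + 1].1 = (ph[j]'(by omega)).2 + 1) ∧
  (∀ (j : ℕ) (h : j < ph.length),
    ph[j].1 = ph[j].2 ∨
      ∃ x < ph[j].1, OccursAt T (Slice T ph[j].1 (ph[j].2 - ph[j].1)) x) ∧
  (∀ (j : ℕ) (h : j < ph.length), ph[j].2 + 1 < T.length →
    ¬ ∃ x < ph[j].1, OccursAt T (Slice T ph[j].1 (ph[j].2 - ph[j].1 + 1)) x)

/-- The occurrence of a length-`m` pattern at position `s` touches a phrase boundary
    of the parse `ph`: some phrase-end position `q_j` satisfies `s ≤ q_j ≤ s+m-1`. -/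
def TouchesBoundary (ph : List (ℕ × ℕ)) (s m : ℕ) : Prop :=
  ∃ (j : ℕ) (h : j < ph.length), s ≤ ph[j].2 ∧ ph[j].2 < s + m


lemma length_slice {T : List α} {s m : ℕ} (h : s + m ≤ T.length) :
    (Slice T s m).length = m := by
  simp only [Slice, List.length_take, List.length_drop]
  omega

lemma slice_slice (T : List α) {p L a m : ℕ} (h : a + m ≤ L) :
    Slice (Slice T p L) a m = Slice T (p + a) m := by
  simp only [Slice, List.drop_take, List.drop_drop, List.take_take]
  congr 1; omega

lemma slice_reverse (T : List α) {s m : ℕ} (h : s + m ≤ T.length) :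
    Slice T.reverse (T.length - s - m) m = (Slice T s m).reverse := by
  have hlen : (T.take (s + m)).length = s + m := by rw [List.length_take]; omega
  have hdrop : T.reverse.drop (T.length - s - m) = (T.take (s + m)).reverse := by
    rw [List.reverse_take]; congr 1; omega
  calc Slice T.reverse (T.length - s - m) m
      = ((T.take (s + m)).drop s).reverse := by
        rw [Slice, hdrop, List.reverse_drop, hlen]; congr 1; omega
    _ = (Slice T s m).reverse := by rw [List.drop_take, Slice]; congr 2; omega

lemma OccursAt.reverse {T U : List α} {s : ℕ} (h : OccursAt T U s) :
    OccursAt T.reverse U.reverse (T.length - s - U.length) := by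
  have := h.1
  refine ⟨by simp only [List.length_reverse]; omega, ?_⟩
  rw [List.length_reverse, slice_reverse T h.1, h.2]

lemma OccursAt.of_reverse {T U : List α} {s : ℕ} (h : OccursAt T.reverse U.reverse s) :
    OccursAt T U (T.length - s - U.length) := by
  simpa using h.reverse

lemma OccursAt.slice {T W : List α} {x : ℕ} (h : OccursAt T W x) {a m : ℕ}
    (ham : a + m ≤ W.length) : OccursAt T (Slice W a m) (x + a) := by
  have hlen : (Slice W a m).length = m := length_slice ham
  have := h.1
  refine ⟨by omega, ?_⟩
  rw [hlen, ← h.2, slice_slice T ham]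

lemma le_of_occursAt_reverse_of_rightmost {T U : List α} {s : ℕ}
    (hmax : ∀ s', OccursAt T U s' → s' ≤ s) {s' : ℕ} (h : OccursAt T.reverse U.reverse s') :
    T.length - s - U.length ≤ s' := by
  have hs' := hmax _ h.of_reverse
  have hfit : s' + U.length ≤ T.length := by simpa using h.1
  omega

namespace IsLZ77Parse

variable {T : List α} {ph : List (ℕ × ℕ)}

lemma exists_phrase_mem (hph : IsLZ77Parse T ph) {i : ℕ} (hi : i < T.length) :
    ∃ (j : ℕ) (h : j < ph.length), ph[j].1 ≤ i ∧ i ≤ ph[j].2 := by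
  obtain ⟨hpos, -, hfirst, hlast, hadj, -, -⟩ := hph
  -- walk back from the last phrase to the first phrase that ends at or after `i`
  have key : ∀ j (h : j < ph.length), i ≤ ph[j].2 →
      ∃ (j' : ℕ) (h' : j' < ph.length), ph[j'].1 ≤ i ∧ i ≤ ph[j'].2 := by
    intro j
    induction j with
    | zero => exact fun h hle ↦ ⟨0, h, by rw [hfirst h]; omega, hle⟩
    | succ j ih =>
      intro h hle
      by_cases hstart : ph[j + 1].1 ≤ i
      · exact ⟨j + 1, h, hstart, hle⟩
      · have := hadj j h
        exact ih (by omega) (by omega)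
  have hl : ph.length - 1 < ph.length := by omega
  exact key _ hl (by have := hlast hl; omega)

theorem touchesBoundary_of_leftmost (hph : IsLZ77Parse T ph) {U : List α} {s : ℕ}
    (hU : 1 ≤ U.length) (hocc : OccursAt T U s)
    (hmin : ∀ s', OccursAt T U s' → s ≤ s') : TouchesBoundary ph s U.length := by
  by_contra hcon
  obtain ⟨j, hj, hstart, hend⟩ := hph.exists_phrase_mem (i := s) (by have := hocc.1; omega)
  have hpast : s + U.length ≤ ph[j].2 := by
    by_contra! hlt
    exact hcon ⟨j, hj, hend, hlt⟩
  obtain ⟨-, hbounds, -, -, -, hcopied, -⟩ := hph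
  have hq := (hbounds j hj).2
  rcases hcopied j hj with hsingle | ⟨x, hx, hsrc⟩
  · omega
  · have hcopy := hsrc.slice (a := s - ph[j].1) (m := U.length)
      (by rw [length_slice (by omega)]; omega)
    rw [slice_slice T (by omega), show ph[j].1 + (s - ph[j].1) = s by omega, hocc.2] at hcopy
    have := hmin _ hcopy
    omega

end IsLZ77Parse

theorem rightmost_occurrence_reverse_touches_boundary_general
    (T : List α) (ph : List (ℕ × ℕ)) (hph : IsLZ77Parse T.reverse ph)
    (P : List α) (hm : 1 ≤ P.length) (s : ℕ) (hocc : OccursAt T P s)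
    (hmax : ∀ s', OccursAt T P s' → s' ≤ s) :
    OccursAt T.reverse P.reverse (T.length - s - P.length) ∧
    (∀ s', OccursAt T.reverse P.reverse s' → T.length - s - P.length ≤ s') ∧
    ∃ (j : ℕ) (h : j < ph.length),
      T.length - s - P.length ≤ ph[j].2 ∧ ph[j].2 < T.length - s := by
  have hrev : OccursAt T.reverse P.reverse (T.length - s - P.length) := hocc.reverse
  have hleft : ∀ s', OccursAt T.reverse P.reverse s' → T.length - s - P.length ≤ s' :=
    fun _ ↦ le_of_occursAt_reverse_of_rightmost hmax
  refine ⟨hrev, hleft, ?_⟩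
  obtain ⟨j, hj, hlo, hhi⟩ := hph.touchesBoundary_of_leftmost (by simpa using hm) hrev hleft
  refine ⟨j, hj, hlo, ?_⟩
  have := hocc.1
  simp only [List.length_reverse] at hhi
  omega

/-- If `s` is the rightmost occurrence of a nonempty pattern `P` in
`T`, then the corresponding occurrence of `P.reverse` in `T.reverse` (starting, in
0-based terms, at position `|T| - s - |P|`) is the leftmost occurrence of `P.reverse`
in `T.reverse`, and it touches a phrase boundary of the LZ77 parse of `T.reverse`. -/
theorem rightmost_occurrence_reverse_touches_boundary [Fintype α]
    (T : List α) (hT : T ≠ []) (ph : List (ℕ × ℕ)) (hph : IsLZ77Parse T.reverse ph)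
    (P : List α) (hm : 1 ≤ P.length) (s : ℕ) (hocc : OccursAt T P s)
    (hmax : ∀ s', OccursAt T P s' → s' ≤ s) :
    OccursAt T.reverse P.reverse (T.length - s - P.length) ∧
    (∀ s', OccursAt T.reverse P.reverse s' → T.length - s - P.length ≤ s') ∧
    ∃ (j : ℕ) (h : j < ph.length),
      T.length - s - P.length ≤ ph[j].2 ∧ ph[j].2 < T.length - s :=
  rightmost_occurrence_reverse_touches_boundary_general T ph hph P hm s hocc hmax

end RStarIndex
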